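/- Let M, a, s be positive integers with M > 1 such that ∑_{i=0}^{M-1} (a+i)^2 = s^2. If M = 24·m₁ for a positive integer m₁, then for every integer i ≥ 1 one has m₁ ≢ 3^(2i-1) (mod 3^(2i)) and m₁ ≢ 2·3^(2i-1) (mod 3^(2i)). -/

import Mathlib

/-!
Since `6 ∑_{i<M} (a+i)^2 = M (6a^2 + 6a(M-1) + (M-1)(2M-1))` and the second factor is `≡ 1 (mod 3)`
when `3 ∣ M`, the sum has 3-adic valuation `v₃(M) - 1`. For `M = 24 m₁` this is `v₃(m₁)`, which must
therefore be even when the sum is a square. Either congruence in the statement forces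
`v₃(m₁) = 2i - 1`.
-/

open Finset

theorem six_mul_sum_range_succ_add_sq (a n : ℕ) :
    6 * ∑ i ∈ range (n + 1), (a + i) ^ 2 = (n + 1) * (6 * a ^ 2 + 6 * a * n + n * (2 * n + 1)) := by
  induction n with
  | zero => simp
  | succ n ih =>
    rw [sum_range_succ, mul_add, ih]
    ring

theorem padicValNat_three_sum_range_add_sq_add_one {a M : ℕ} (hM : 3 ∣ M) (hM0 : M ≠ 0) :
    padicValNat 3 (∑ i ∈ range M, (a + i) ^ 2) + 1 = padicValNat 3 M := by
  obtain ⟨n, rfl⟩ : ∃ n, M = n + 1 := ⟨M - 1, by omega⟩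
  obtain ⟨k, hk⟩ : ∃ k, n = 3 * k + 2 := ⟨n / 3, by omega⟩
  have hB : ¬ 3 ∣ 6 * a ^ 2 + 6 * a * n + n * (2 * n + 1) := by
    rw [hk, show 6 * a ^ 2 + 6 * a * (3 * k + 2) + (3 * k + 2) * (2 * (3 * k + 2) + 1)
      = 3 * (2 * a ^ 2 + 6 * a * k + 4 * a + 6 * k ^ 2 + 9 * k + 3) + 1 by ring]
    omega
  have h6 := six_mul_sum_range_succ_add_sq a n
  have hS : ∑ i ∈ range (n + 1), (a + i) ^ 2 ≠ 0 := by
    intro h0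
    rw [h0, mul_zero, eq_comm, mul_eq_zero] at h6
    omega
  apply_fun padicValNat 3 at h6
  rw [padicValNat.mul (by norm_num) hS, padicValNat.mul hM0 (by omega),
    padicValNat.eq_zero_of_not_dvd hB, show (6 : ℕ) = 3 * 2 from rfl,
    padicValNat.mul (by norm_num) (by norm_num), padicValNat_self,
    padicValNat.eq_zero_of_not_dvd (by norm_num : ¬ 3 ∣ 2)] at h6
  omega

theorem padicValNat_eq_of_modEq_mul_pow {p m c k : ℕ} [Fact p.Prime] (hc : ¬ p ∣ c)
    (h : m ≡ c * p ^ k [MOD p ^ (k + 1)]) : padicValNat p m = k := by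
  have hdvd : p ^ k ∣ m := (h.dvd_iff (pow_dvd_pow p k.le_succ)).2 (dvd_mul_left _ _)
  have hndvd : ¬ p ^ (k + 1) ∣ m := by
    rw [h.dvd_iff dvd_rfl, pow_succ']
    exact fun h' => hc (Nat.dvd_of_mul_dvd_mul_right (pow_pos (Fact.out : p.Prime).pos k) h')
  have hm : m ≠ 0 := by rintro rfl; exact hndvd (dvd_zero _)
  rw [padicValNat_dvd_iff_le hm] at hdvd hndvd
  omega

theorem even_padicValNat_three_of_sum_range_add_sq_eq_sq {a s m : ℕ}
    (h : ∑ i ∈ range (24 * m), (a + i) ^ 2 = s ^ 2) : Even (padicValNat 3 m) := by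
  rcases eq_or_ne m 0 with rfl | hm
  · simp
  have hv := padicValNat_three_sum_range_add_sq_add_one (a := a)
    (dvd_mul_of_dvd_left (by norm_num) m) (by omega : 24 * m ≠ 0)
  rw [h, padicValNat.pow, padicValNat.mul (by norm_num) hm, show (24 : ℕ) = 3 * 8 from rfl,
    padicValNat.mul (by norm_num) (by norm_num), padicValNat_self,
    padicValNat.eq_zero_of_not_dvd (by norm_num : ¬ 3 ∣ 8)] at hv
  exact ⟨padicValNat 3 s, by omega⟩

theorem stmt_general (M a s m₁ : ℕ)
    (hsum : ∑ i ∈ Finset.range M, (a + i) ^ 2 = s ^ 2)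
    (hMeq : M = 24 * m₁) :
    ∀ i : ℕ, 1 ≤ i →
      ¬ m₁ ≡ 3 ^ (2 * i - 1) [MOD 3 ^ (2 * i)] ∧ ¬ m₁ ≡ 2 * 3 ^ (2 * i - 1) [MOD 3 ^ (2 * i)] := by
  subst hMeq
  intro i hi
  have heven := even_padicValNat_three_of_sum_range_add_sq_eq_sq hsum
  set k := 2 * i - 1
  rw [show 2 * i = k + 1 by omega]
  have hk : ∀ c, ¬ 3 ∣ c → ¬ m₁ ≡ c * 3 ^ k [MOD 3 ^ (k + 1)] := fun c hc h => by
    rw [padicValNat_eq_of_modEq_mul_pow hc h] at heven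
    exact Nat.not_even_iff_odd.2 ⟨i - 1, by omega⟩ heven
  exact ⟨by simpa using hk 1 (by norm_num), hk 2 (by norm_num)⟩

theorem stmt (M a s m₁ : ℕ) (hM : 1 < M) (ha : 1 ≤ a) (hs : 1 ≤ s)
    (hsum : ∑ i ∈ Finset.range M, (a + i) ^ 2 = s ^ 2)
    (hm : 1 ≤ m₁) (hMeq : M = 24 * m₁) :
    ∀ i : ℕ, 1 ≤ i →
      ¬ m₁ ≡ 3 ^ (2 * i - 1) [MOD 3 ^ (2 * i)] ∧ ¬ m₁ ≡ 2 * 3 ^ (2 * i - 1) [MOD 3 ^ (2 * i)] :=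
  stmt_general M a s m₁ hsum hMeq
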